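/- Let F: ℝ → ℝ be measurable and nondecreasing with F(x) = 0 for x ≤ 0 and 0 ≤ F(x) ≤ 1 for all x, let r > 0, δ > 0, N > 0 with σ²(N) > 0, where μ(u) := ∫₀^u (1 − F(x)) dx and σ²(u) := ∫₀^u 2x(1 − F(x)) dx. Suppose δ ≥ μ(N) + rN − σ²(N)/(2N), and let γ be the unique positive root of (1/2)σ²(N)·m² − (μ(N) − δ)·m − r = 0. Let η > 0 and V(x) := η·e^{−γx}. Then for every x ∈ ℝ, min_{u ∈ [0,N]} [ (1/2)σ²(u)·V''(x) + (μ(u) − δ)·V'(x) − r·V(x) ] = 0, and the minimum over [0,N] is attained at u = N. -/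

import Mathlib

open Real MeasureTheory

/-
Writing `V = η e^{-γx}`, the HJB operator at control `u` equals `V(x) q(u)` with
`q(u) = ½σ²(u)γ² − (μ(u) − δ)γ − r`, and `q(N) = 0` is the defining equation of `γ`. Further
`q(u) − q(N) = γ ∫_u^N (1 − F(x))(1 − γx) dx`, which is nonnegative as soon as `γN ≤ 1`.
That bound is where the high-debt condition enters: on `(0, ∞)` the root equation reads
`μ(N) − δ = σ²(N)γ/2 − r/γ`, the right side is increasing in `γ`, and the condition says that its
value at `1/N` is at least `μ(N) − δ`.
-/

lemma mul_le_one_of_quadratic_root {s r m N γ : ℝ} (hs : 0 ≤ s) (hr : 0 < r) (hN : 0 < N)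
    (hγ : 0 < γ) (hroot : 1 / 2 * s * γ ^ 2 - m * γ - r = 0) (hm : m ≤ s / (2 * N) - r * N) :
    γ * N ≤ 1 := by
  by_contra! h
  have hmγ : m * γ = 1 / 2 * s * γ ^ 2 - r := by linarith
  have key : (γ * N - 1) * (s * γ / 2 + r * N) ≤ 0 := by
    have := mul_le_mul_of_nonneg_right hm (by positivity : 0 ≤ γ * N)
    field_simp at this
    nlinarith
  exact (mul_pos (by linarith) (by positivity)).not_ge key

lemma half_mul_integral_mul_le_integral {g : ℝ → ℝ} {γ a b : ℝ}
    (hg : IntervalIntegrable g volume a b) (hg0 : ∀ x ∈ Set.Icc a b, 0 ≤ g x)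
    (hγ : 0 ≤ γ) (hab : a ≤ b) (hγb : γ * b ≤ 1) :
    γ / 2 * ∫ x in a..b, 2 * x * g x ≤ ∫ x in a..b, g x := by
  have hxg : IntervalIntegrable (fun x => 2 * x * g x) volume a b :=
    hg.continuousOn_mul (by fun_prop)
  rw [← sub_nonneg, ← intervalIntegral.integral_const_mul,
    ← intervalIntegral.integral_sub hg (hxg.const_mul _)]
  refine intervalIntegral.integral_nonneg hab fun x hx => ?_
  have hγx : γ * x ≤ 1 := (mul_le_mul_of_nonneg_left hx.2 hγ).trans hγb
  have : g x - γ / 2 * (2 * x * g x) = g x * (1 - γ * x) := by ring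
  rw [this]
  exact mul_nonneg (hg0 x hx) (by linarith)

lemma deriv_const_mul_exp_mul (a c : ℝ) :
    deriv (fun x => a * exp (c * x)) = fun x => c * (a * exp (c * x)) := by
  funext x
  refine (((hasDerivAt_id x).const_mul c).exp.const_mul a).deriv.trans ?_
  simp only [id]
  ring

lemma hjb_operator_exp (η γ a b r x : ℝ) :
    1 / 2 * a * deriv (deriv fun y => η * exp (-γ * y)) x
        + b * deriv (fun y => η * exp (-γ * y)) x - r * (η * exp (-γ * x))
      = η * exp (-γ * x) * (1 / 2 * a * γ ^ 2 - b * γ - r) := by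
  have h2 : deriv (deriv fun y => η * exp (-γ * y)) x = -γ * (-γ * (η * exp (-γ * x))) := by
    simp only [deriv_const_mul_exp_mul, ← mul_assoc]
  rw [h2, deriv_const_mul_exp_mul]
  ring

theorem stmt_13_general (F : ℝ → ℝ) (hmono : Monotone F)
    (hF1 : ∀ x, 0 ≤ F x ∧ F x ≤ 1)
    (r δ N : ℝ) (hr : 0 < r) (hN : 0 < N)
    (μ σ2 : ℝ → ℝ)
    (hμ : ∀ u, μ u = ∫ x in (0 : ℝ)..u, (1 - F x))
    (hσ2 : ∀ u, σ2 u = ∫ x in (0 : ℝ)..u, 2 * x * (1 - F x))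
    (hσ2N : 0 < σ2 N)
    (hhigh : μ N + r * N - σ2 N / (2 * N) ≤ δ)
    (γ : ℝ) (hγpos : 0 < γ)
    (hγroot : (1 / 2) * σ2 N * γ ^ 2 - (μ N - δ) * γ - r = 0)
    (η : ℝ) (hη : 0 < η)
    (V : ℝ → ℝ) (hV : ∀ x, V x = η * Real.exp (-γ * x)) :
    ∀ x : ℝ,
      IsMinOn
        (fun u : ℝ => (1 / 2) * σ2 u * deriv (deriv V) x + (μ u - δ) * deriv V x - r * V x)
        (Set.Icc 0 N) N ∧
      (1 / 2) * σ2 N * deriv (deriv V) x + (μ N - δ) * deriv V x - r * V x = 0 := by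
  obtain rfl : V = fun x => η * exp (-γ * x) := funext hV
  have hγN : γ * N ≤ 1 :=
    mul_le_one_of_quadratic_root hσ2N.le hr hN hγpos hγroot (by linarith)
  have hint : ∀ a b, IntervalIntegrable (fun x => 1 - F x) volume a b := fun a b =>
    (show Antitone fun x => 1 - F x from fun _ _ h => sub_le_sub_left (hmono h) 1).intervalIntegrable
  have hgap : ∀ u ∈ Set.Icc 0 N, γ / 2 * (σ2 N - σ2 u) ≤ μ N - μ u := by
    intro u hu
    rw [hμ, hμ, hσ2, hσ2, intervalIntegral.integral_interval_sub_left (hint 0 N) (hint 0 u),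
      intervalIntegral.integral_interval_sub_left ((hint 0 N).continuousOn_mul (by fun_prop))
        ((hint 0 u).continuousOn_mul (by fun_prop))]
    exact half_mul_integral_mul_le_integral (hint u N) (fun x _ => by linarith [(hF1 x).2])
      hγpos.le hu.2 hγN
  intro x
  simp only [hjb_operator_exp]
  refine ⟨fun u hu => ?_, by rw [hγroot, mul_zero]⟩
  change η * exp (-γ * x) * _ ≤ η * exp (-γ * x) * _
  have hq : 1 / 2 * σ2 u * γ ^ 2 - (μ u - δ) * γ - r
      = γ * (μ N - μ u - γ / 2 * (σ2 N - σ2 u)) := by linear_combination hγroot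
  rw [hγroot, hq, mul_zero]
  exact mul_nonneg (by positivity) (mul_nonneg hγpos.le (sub_nonneg.2 (hgap u hu)))

/-- High-debt-liability case of excess-of-loss reinsurance: if
`δ ≥ μ(N) + rN − σ²(N)/(2N)` and `γ` is the unique positive root of
`(1/2)σ²(N)m² − (μ(N) − δ)m − r = 0`, then `V x = η exp(−γx)` solves the HJB equation;
the minimum over `u ∈ [0, N]` of the HJB operator is `0`, attained at `u = N`. -/
theorem stmt_13 (F : ℝ → ℝ) (hmeas : Measurable F) (hmono : Monotone F)
    (hF0 : ∀ x ≤ (0 : ℝ), F x = 0) (hF1 : ∀ x, 0 ≤ F x ∧ F x ≤ 1)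
    (r δ N : ℝ) (hr : 0 < r) (hδ : 0 < δ) (hN : 0 < N)
    (μ σ2 : ℝ → ℝ)
    (hμ : ∀ u, μ u = ∫ x in (0 : ℝ)..u, (1 - F x))
    (hσ2 : ∀ u, σ2 u = ∫ x in (0 : ℝ)..u, 2 * x * (1 - F x))
    (hσ2N : 0 < σ2 N)
    (hhigh : μ N + r * N - σ2 N / (2 * N) ≤ δ)
    (γ : ℝ) (hγpos : 0 < γ)
    (hγroot : (1 / 2) * σ2 N * γ ^ 2 - (μ N - δ) * γ - r = 0)
    (hγuniq : ∀ m : ℝ, 0 < m → (1 / 2) * σ2 N * m ^ 2 - (μ N - δ) * m - r = 0 → m = γ)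
    (η : ℝ) (hη : 0 < η)
    (V : ℝ → ℝ) (hV : ∀ x, V x = η * Real.exp (-γ * x)) :
    ∀ x : ℝ,
      IsMinOn
        (fun u : ℝ => (1 / 2) * σ2 u * deriv (deriv V) x + (μ u - δ) * deriv V x - r * V x)
        (Set.Icc 0 N) N ∧
      (1 / 2) * σ2 N * deriv (deriv V) x + (μ N - δ) * deriv V x - r * V x = 0 :=
  stmt_13_general F hmono hF1 r δ N hr hN μ σ2 hμ hσ2 hσ2N hhigh γ hγpos hγroot η hη V hV
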